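/- Control of the symmetrized top-order pairing of B_ξ against the self-adjoint part of the stretching operator (estimate of expression (2.9) in the proof of Lemma 2.2): Let α, β ∈ ℕ³ be multi-indices and set θ := max(|α|, |β|). There exists a constant C, depending only on α and β, such that for every ℤ³-periodic smooth divergence-free mean-zero field ξ and every ℤ³-periodic smooth field f: ⟨B_ξ(D^α f), (𝓣_ξ + 𝓣*_ξ)(D^β f)⟩_{L²} + ⟨B_ξ(D^β f), (𝓣_ξ + 𝓣*_ξ)(D^α f)⟩_{L²} ≤ C ‖ξ‖_{W^{2,∞}}² ‖f‖_{W^{θ,2}}². -/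

import Mathlib

open MeasureTheory

noncomputable section

/-- Points of ℝ³ (as `Fin 3 → ℝ`). -/
abbrev V3 := Fin 3 → ℝ
/-- Vector fields on ℝ³. -/
abbrev VF := V3 → V3

/-- Smoothness of a vector field. -/
def SmoothVF (f : VF) : Prop := ContDiff ℝ (⊤ : ℕ∞) f

/-- Smoothness of a scalar function. -/
def SmoothS (p : V3 → ℝ) : Prop := ContDiff ℝ (⊤ : ℕ∞) p

/-- The periodicity cell [0,1)³. -/
def cube : Set V3 := Set.univ.pi fun _ => Set.Ico (0:ℝ) 1

/-- Partial derivative in the j-th coordinate, acting componentwise. -/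
def pd (j : Fin 3) (f : VF) : VF := fun x => fderiv ℝ f x (Pi.single j 1)

/-- Iterated derivative D^α = ∂₁^{α₁}∂₂^{α₂}∂₃^{α₃} for a multi-index α = (α₁, α₂, α₃). -/
def Dm (α : ℕ × ℕ × ℕ) (f : VF) : VF :=
  (pd 0)^[α.1] ((pd 1)^[α.2.1] ((pd 2)^[α.2.2] f))

/-- The order |α| of a multi-index. -/
def mdeg (α : ℕ × ℕ × ℕ) : ℕ := α.1 + α.2.1 + α.2.2

/-- ℤ³-periodicity of a vector field. -/
def Periodic3 (f : VF) : Prop :=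
  ∀ (x : V3) (k : Fin 3 → ℤ), f (x + fun i => (k i : ℝ)) = f x

/-- ℤ³-periodicity of a scalar function. -/
def PeriodicS (p : V3 → ℝ) : Prop :=
  ∀ (x : V3) (k : Fin 3 → ℤ), p (x + fun i => (k i : ℝ)) = p x

/-- Divergence-free: Σ_j ∂_j f^j ≡ 0. -/
def DivFree (f : VF) : Prop := ∀ x, ∑ j, pd j f x j = 0

/-- Mean-zero over the periodicity cell. -/
def MeanZero (f : VF) : Prop := (∫ x in cube, f x) = 0

/-- The L² inner product over the periodicity cell. -/
def L2inner (f g : VF) : ℝ := ∫ x in cube, ∑ i, f x i * g x i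

/-- The finite set of multi-indices of order at most m. -/
def midx (m : ℕ) : Finset (ℕ × ℕ × ℕ) :=
  (Finset.range (m+1) ×ˢ Finset.range (m+1) ×ˢ Finset.range (m+1)).filter
    fun α => mdeg α ≤ m

lemma midx_nonempty (m : ℕ) : (midx m).Nonempty :=
  ⟨(0,0,0), by
    unfold midx
    exact Finset.mem_filter.mpr ⟨Finset.mem_product.mpr ⟨Finset.mem_range.mpr (Nat.succ_pos m),
      Finset.mem_product.mpr ⟨Finset.mem_range.mpr (Nat.succ_pos m),
        Finset.mem_range.mpr (Nat.succ_pos m)⟩⟩, Nat.zero_le m⟩⟩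

/-- The W^{m,2} inner product ⟨f,g⟩_{W^{m,2}} = Σ_{|α|≤m} ⟨D^α f, D^α g⟩_{L²}. -/
def sobInner (m : ℕ) (f g : VF) : ℝ := ∑ α ∈ midx m, L2inner (Dm α f) (Dm α g)

/-- The squared W^{m,2} norm. -/
def sobNormSq (m : ℕ) (f : VF) : ℝ := sobInner m f f

/-- The W^{k,∞} norm: max over |α| ≤ k of sup_x |D^α ξ(x)|. -/
def WinfNorm (k : ℕ) (ξ : VF) : ℝ :=
  (midx k).sup' (midx_nonempty k) fun α => ⨆ x, ‖Dm α ξ x‖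

/-- The transport operator 𝓛_ξ f = Σ_j ξ^j ∂_j f. -/
def transport (ξ f : VF) : VF := fun x => ∑ j, ξ x j • pd j f x

/-- The stretching operator 𝓣_ξ f, with l-th component Σ_j f^j ∂_l ξ^j. -/
def stretch (ξ f : VF) : VF := fun x l => ∑ j, f x j * pd l ξ x j

/-- The L²-adjoint 𝓣*_ξ g, with j-th component Σ_l g^l ∂_l ξ^j. -/
def stretchStar (ξ g : VF) : VF := fun x j => ∑ l, g x l * pd l ξ x j

/-- The transport–stretching operator B_ξ = 𝓛_ξ + 𝓣_ξ. -/
def Bop (ξ f : VF) : VF := fun x => transport ξ f x + stretch ξ f x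

/-- The gradient of a scalar function. -/
def grad (p : V3 → ℝ) : VF := fun x i => fderiv ℝ p x (Pi.single i 1)

/-- `IsLeray u g` : g is the Leray projection 𝒫u of u, i.e. g is a ℤ³-periodic smooth
divergence-free mean-zero field and u − g = ∇p + c for some ℤ³-periodic smooth scalar p
and constant vector c. -/
def IsLeray (u g : VF) : Prop :=
  Periodic3 g ∧ SmoothVF g ∧ DivFree g ∧ MeanZero g ∧
  ∃ (p : V3 → ℝ) (c : V3), PeriodicS p ∧ SmoothS p ∧
    ∀ x, u x - g x = grad p x + c

/-- The componentwise Laplacian. -/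
def lap (f : VF) : VF := fun x => ∑ j, pd j (pd j f) x

/-- The Stokes inner product ⟨u,v⟩_{A^{m/2}}. -/
def stokesInner (m : ℕ) (u v : VF) : ℝ :=
  if m % 2 = 0 then L2inner (lap^[m/2] u) (lap^[m/2] v)
  else ∑ j : Fin 3, L2inner (pd j (lap^[m/2] u)) (pd j (lap^[m/2] v))

/-- A ℤ³-periodic smooth divergence-free mean-zero vector field. -/
def GoodField (f : VF) : Prop :=
  Periodic3 f ∧ SmoothVF f ∧ DivFree f ∧ MeanZero f

/-!
Write `S = ∇ξ + ∇ξᵀ`, so that `(𝓣_ξ + 𝓣*_ξ) h = S h`. Because `S` is symmetric, the two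
transport contributions `⟨ξ·∇g, S h⟩ + ⟨ξ·∇h, S g⟩` add up to `∫ ξ·∇(g·S h)` minus
`∫ g·(ξ·∇S) h`. For divergence-free `ξ` one has `ξ·∇F = div (F ξ)`, and the integral of the
divergence of a periodic field over the period cell vanishes (divergence theorem: opposite faces
cancel). What is left is `∫ Σ K_uv g_u h_v` with coefficients `K_uv` quadratic in `ξ, ∇ξ, ∇²ξ`,
hence bounded by `‖ξ‖²_{W^{2,∞}}`. Taking `g = D^α f`, `h = D^β f` gives the estimate.
-/

section

variable {f ξ g h : VF} {k : ℕ}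

lemma SmoothVF.differentiable (hf : SmoothVF f) : Differentiable ℝ f :=
  ContDiff.differentiable hf (by simp)

lemma SmoothVF.contDiff_fderiv (hf : SmoothVF f) : ContDiff ℝ (⊤ : ℕ∞) (fderiv ℝ f) :=
  hf.fderiv_right le_rfl

lemma SmoothVF.pd (hf : SmoothVF f) (j : Fin 3) : SmoothVF (pd j f) :=
  hf.contDiff_fderiv.clm_apply contDiff_const

lemma SmoothVF.Dm (hf : SmoothVF f) (γ : ℕ × ℕ × ℕ) : SmoothVF (Dm γ f) := by
  have iter (j : Fin 3) (n : ℕ) {f : VF} (hf : SmoothVF f) : SmoothVF ((_root_.pd j)^[n] f) :=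
    Function.Iterate.rec SmoothVF hf (fun _ h => h.pd j) n
  exact iter 0 _ (iter 1 _ (iter 2 _ hf))

lemma SmoothVF.component (hf : SmoothVF f) (i : Fin 3) : SmoothS fun x => f x i :=
  (contDiff_apply ℝ ℝ i).comp hf

lemma SmoothVF.differentiable_component (hf : SmoothVF f) (i : Fin 3) :
    Differentiable ℝ fun x => f x i :=
  (hf.component i).differentiable (by simp)

lemma SmoothVF.continuous_component (hf : SmoothVF f) (i : Fin 3) :
    Continuous fun x => f x i :=
  (hf.component i).continuous

lemma Periodic3.pd (hf : Periodic3 f) (j : Fin 3) : Periodic3 (pd j f) := by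
  intro x k
  have : (fun y => f (y + fun i => (k i : ℝ))) = f := funext fun y => hf y k
  simp only [_root_.pd, ← fderiv_comp_add_right, this]

lemma Periodic3.Dm (hf : Periodic3 f) (γ : ℕ × ℕ × ℕ) : Periodic3 (Dm γ f) := by
  have iter (j : Fin 3) (n : ℕ) {f : VF} (hf : Periodic3 f) : Periodic3 ((_root_.pd j)^[n] f) :=
    Function.Iterate.rec Periodic3 hf (fun _ h => h.pd j) n
  exact iter 0 _ (iter 1 _ (iter 2 _ hf))

lemma pd_pd_comm (hf : SmoothVF f) (i j : Fin 3) : pd j (pd i f) = pd i (pd j f) := by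
  funext x
  have hsymm : IsSymmSndFDerivAt ℝ f x := hf.contDiffAt.isSymmSndFDerivAt <| by
    simp only [minSmoothness_of_isRCLikeNormedField]; exact WithTop.coe_le_coe.2 le_top
  have hdf : Differentiable ℝ (fderiv ℝ f) := hf.contDiff_fderiv.differentiable (by simp)
  unfold pd
  simp [fderiv_clm_apply (hdf x) (differentiableAt_const _), hsymm _ _]

def pdS (j : Fin 3) (p : V3 → ℝ) : V3 → ℝ := fun x => fderiv ℝ p x (Pi.single j 1)

section pdS

variable {p q : V3 → ℝ} {x : V3} {j : Fin 3}

lemma SmoothS.pdS (hp : SmoothS p) (j : Fin 3) : SmoothS (pdS j p) :=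
  (hp.fderiv_right le_rfl).clm_apply contDiff_const

lemma pdS_mul (hp : DifferentiableAt ℝ p x) (hq : DifferentiableAt ℝ q x) :
    pdS j (fun y => p y * q y) x = pdS j p x * q x + p x * pdS j q x := by
  simp only [pdS, fderiv_fun_mul hp hq, FunLike.coe_add, Pi.add_apply, FunLike.coe_smul,
    Pi.smul_apply, smul_eq_mul]
  ring

lemma pdS_add (hp : DifferentiableAt ℝ p x) (hq : DifferentiableAt ℝ q x) :
    pdS j (fun y => p y + q y) x = pdS j p x + pdS j q x := by
  simp [pdS, fderiv_fun_add hp hq]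

lemma pdS_sum {ι : Type*} {s : Finset ι} {p : ι → V3 → ℝ}
    (hp : ∀ i ∈ s, DifferentiableAt ℝ (p i) x) :
    pdS j (fun y => ∑ i ∈ s, p i y) x = ∑ i ∈ s, pdS j (p i) x := by
  simp [pdS, fderiv_fun_sum hp]

lemma pdS_apply (hf : DifferentiableAt ℝ f x) (i : Fin 3) :
    pdS j (fun y => f y i) x = pd j f x i := by
  simp [pdS, pd, fderiv_apply hf]

end pdS

lemma measurableSet_cube : MeasurableSet cube :=
  MeasurableSet.univ_pi fun _ => measurableSet_Ico

lemma cube_ae_eq_Icc : cube =ᵐ[volume] Set.Icc (0 : V3) 1 := by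
  rw [volume_pi]; exact Measure.univ_pi_Ico_ae_eq_Icc

lemma Continuous.integrableOn_cube {p : V3 → ℝ} (hp : Continuous p) : IntegrableOn p cube :=
  (hp.continuousOn.integrableOn_compact isCompact_Icc).mono_set
    fun _ hx => ⟨fun i => (hx i trivial).1, fun i => (hx i trivial).2.le⟩

lemma insertNth_one_eq_add_single {n : ℕ} (i : Fin (n + 1)) (y : Fin n → ℝ) :
    Fin.insertNth i (1 : ℝ) y
      = Fin.insertNth i 0 y + fun l => ((Pi.single i 1 : Fin (n + 1) → ℤ) l : ℝ) := by
  funext l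
  rcases eq_or_ne l i with rfl | hli
  · simp
  · obtain ⟨m, rfl⟩ := Fin.exists_succAbove_eq hli
    simp [Pi.single_apply, Fin.succAbove_ne]

lemma integral_div_eq_zero (hf : SmoothVF f) (hp : Periodic3 f) :
    ∫ x in cube, ∑ j, pd j f x j = 0 := by
  have hdiv : Continuous fun x => ∑ j, pd j f x j :=
    continuous_finsetSum _ fun j _ => (hf.pd j).continuous_component j
  rw [setIntegral_congr_set cube_ae_eq_Icc]
  refine (integral_divergence_of_hasFDerivAt_off_countable 0 1 zero_le_one f (fderiv ℝ f) ∅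
      Set.countable_empty hf.continuous.continuousOn
      (fun x _ => (hf.differentiable x).hasFDerivAt) hdiv.integrableOn_Icc).trans <|
    Finset.sum_eq_zero fun i _ => ?_
  simp only [Pi.one_apply, Pi.zero_apply, insertNth_one_eq_add_single, hp _ (Pi.single i 1),
    sub_self]

lemma integral_transport_eq_zero (hξ : SmoothVF ξ) (hpξ : Periodic3 ξ) (hdiv : DivFree ξ)
    {F : V3 → ℝ} (hF : SmoothS F) (hpF : PeriodicS F) :
    ∫ x in cube, ∑ j, ξ x j * pdS j F x = 0 := by
  have hG : SmoothVF fun x => F x • ξ x := hF.smul hξ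
  have div_smul_eq (x : V3) : ∑ j, pd j (fun x => F x • ξ x) x j = ∑ j, ξ x j * pdS j F x := by
    have hprod (j : Fin 3) :
        pd j (fun x => F x • ξ x) x j = pdS j F x * ξ x j + F x * pd j ξ x j := by
      rw [← pdS_apply (hG.differentiable x), ← pdS_apply (hξ.differentiable x)]
      exact pdS_mul (hF.differentiable (by simp) x) (hξ.differentiable_component j x)
    simp only [hprod, Finset.sum_add_distrib, ← Finset.mul_sum, hdiv x, mul_zero, add_zero,
      mul_comm]
  simp_rw [← div_smul_eq]
  exact integral_div_eq_zero hG fun x k => by simp only [hpF x k, hpξ x k]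

lemma Periodic3.bddAbove_range_norm (hp : Periodic3 f) (hc : Continuous f) :
    BddAbove (Set.range fun x => ‖f x‖) := by
  refine ((isCompact_Icc (a := (0 : V3)) (b := 1)).bddAbove_image
    (continuous_norm.comp hc).continuousOn).mono ?_
  rintro _ ⟨x, rfl⟩
  have hfract (i : Fin 3) : x i + ((-⌊x i⌋ : ℤ) : ℝ) = Int.fract (x i) := by
    push_cast; rw [← sub_eq_add_neg, Int.self_sub_floor]
  refine ⟨x + fun i => ((-⌊x i⌋ : ℤ) : ℝ), ⟨fun i => ?_, fun i => ?_⟩, congrArg norm (hp x _)⟩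
  · simp only [Pi.add_apply, hfract, Pi.zero_apply, Int.fract_nonneg]
  · simp only [Pi.add_apply, hfract, Pi.one_apply, (Int.fract_lt_one _).le]

lemma mem_midx_of_mdeg_le {γ : ℕ × ℕ × ℕ} {m : ℕ} (h : mdeg γ ≤ m) : γ ∈ midx m := by
  refine Finset.mem_filter.mpr ⟨?_, h⟩
  simp only [mdeg, Finset.mem_product, Finset.mem_range] at h ⊢
  omega

lemma abs_Dm_apply_le_WinfNorm (hp : Periodic3 ξ) (hs : SmoothVF ξ) {γ : ℕ × ℕ × ℕ}
    (hγ : mdeg γ ≤ k) (x : V3) (l : Fin 3) : |Dm γ ξ x l| ≤ WinfNorm k ξ :=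
  calc |Dm γ ξ x l| ≤ ‖Dm γ ξ x‖ := norm_le_pi_norm (Dm γ ξ x) l
    _ ≤ ⨆ y, ‖Dm γ ξ y‖ := le_ciSup ((hp.Dm γ).bddAbove_range_norm (hs.Dm γ).continuous) x
    _ ≤ WinfNorm k ξ := Finset.le_sup' (fun γ => ⨆ y, ‖Dm γ ξ y‖) (mem_midx_of_mdeg_le hγ)

lemma abs_apply_le_WinfNorm (hp : Periodic3 ξ) (hs : SmoothVF ξ) (x : V3) (l : Fin 3) :
    |ξ x l| ≤ WinfNorm k ξ :=
  abs_Dm_apply_le_WinfNorm hp hs (γ := (0, 0, 0)) (Nat.zero_le k) x l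

lemma abs_pd_apply_le_WinfNorm (hp : Periodic3 ξ) (hs : SmoothVF ξ) (hk : 1 ≤ k) (i : Fin 3)
    (x : V3) (l : Fin 3) : |pd i ξ x l| ≤ WinfNorm k ξ := by
  fin_cases i
  exacts [abs_Dm_apply_le_WinfNorm hp hs (γ := (1, 0, 0)) hk x l,
    abs_Dm_apply_le_WinfNorm hp hs (γ := (0, 1, 0)) hk x l,
    abs_Dm_apply_le_WinfNorm hp hs (γ := (0, 0, 1)) hk x l]

lemma abs_pd_pd_apply_le_WinfNorm (hp : Periodic3 ξ) (hs : SmoothVF ξ) (hk : 2 ≤ k)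
    (j i : Fin 3) (x : V3) (l : Fin 3) : |pd j (pd i ξ) x l| ≤ WinfNorm k ξ := by
  wlog hji : j ≤ i generalizing i j
  · rw [pd_pd_comm hs]; exact this i j (le_of_not_ge hji)
  have bound (γ : ℕ × ℕ × ℕ) (hγ : mdeg γ = 2) := abs_Dm_apply_le_WinfNorm hp hs (hγ ▸ hk) x l
  fin_cases i <;> fin_cases j <;> first
    | exact absurd hji (by decide)
    | exact bound (2, 0, 0) rfl | exact bound (1, 1, 0) rfl | exact bound (1, 0, 1) rfl
    | exact bound (0, 2, 0) rfl | exact bound (0, 1, 1) rfl | exact bound (0, 0, 2) rfl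

lemma abs_sum_mul_le {ι : Type*} [Fintype ι] {a b : ι → ℝ} {A B : ℝ} (ha : ∀ i, |a i| ≤ A)
    (hb : ∀ i, |b i| ≤ B) : |∑ i, a i * b i| ≤ Fintype.card ι * (A * B) :=
  calc |∑ i, a i * b i| ≤ ∑ i, |a i * b i| := Finset.abs_sum_le_sum_abs _ _
    _ ≤ ∑ _i : ι, A * B := Finset.sum_le_sum fun i _ => by
        rw [abs_mul]; exact mul_le_mul (ha i) (hb i) (abs_nonneg _) ((abs_nonneg _).trans (ha i))
    _ = Fintype.card ι * (A * B) := by simp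

lemma abs_sum_sum_mul_mul_le {ι : Type*} [Fintype ι] {K : ι → ι → ℝ} {B : ℝ}
    (hK : ∀ u v, |K u v| ≤ B) (G H : ι → ℝ) :
    |∑ u, ∑ v, K u v * (G u * H v)|
      ≤ Fintype.card ι / 2 * B * (∑ u, G u * G u + ∑ u, H u * H u) :=
  calc |∑ u, ∑ v, K u v * (G u * H v)| ≤ ∑ u, ∑ v, |K u v * (G u * H v)| :=
        (Finset.abs_sum_le_sum_abs _ _).trans
          (Finset.sum_le_sum fun u _ => Finset.abs_sum_le_sum_abs _ _)
    _ ≤ ∑ u, ∑ v, B * ((G u * G u + H v * H v) / 2) :=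
        Finset.sum_le_sum fun u _ => Finset.sum_le_sum fun v _ => by
          rw [abs_mul]
          refine mul_le_mul (hK u v) ?_ (abs_nonneg _) ((abs_nonneg _).trans (hK u v))
          rw [abs_le]; constructor <;> nlinarith [sq_nonneg (G u + H v), sq_nonneg (G u - H v)]
    _ = Fintype.card ι / 2 * B * (∑ u, G u * G u + ∑ u, H u * H u) := by
        simp only [← Finset.mul_sum, add_div, Finset.sum_add_distrib, Finset.sum_const,
          Finset.card_univ, nsmul_eq_mul, ← Finset.sum_div]
        ring

def symGrad (ξ : VF) (x : V3) (i l : Fin 3) : ℝ := pd i ξ x l + pd l ξ x i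

def symGradPairing (ξ g h : VF) (x : V3) : ℝ := ∑ i, ∑ l, symGrad ξ x i l * (g x i * h x l)

/-- The coefficients `K_uv` in `𝓣_ξ g · S h + 𝓣_ξ h · S g - g · (ξ·∇S) h = Σ K_uv g_u h_v`,
where `S = symGrad ξ`. -/
def pairingRemainder (ξ : VF) (x : V3) (u v : Fin 3) : ℝ :=
  ∑ i, symGrad ξ x i v * pd i ξ x u + ∑ i, symGrad ξ x i u * pd i ξ x v
    - ∑ j, ξ x j * (pd j (pd u ξ) x v + pd j (pd v ξ) x u)

lemma Bop_apply (ξ g : VF) (x : V3) (i : Fin 3) :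
    Bop ξ g x i = ∑ j, ξ x j * pd j g x i + ∑ j, g x j * pd i ξ x j := by
  simp [Bop, transport, stretch, Finset.sum_apply]

lemma stretch_add_stretchStar_apply (ξ h : VF) (x : V3) (i : Fin 3) :
    stretch ξ h x i + stretchStar ξ h x i = ∑ l, symGrad ξ x i l * h x l := by
  simp only [stretch, stretchStar, symGrad, ← Finset.sum_add_distrib]
  exact Finset.sum_congr rfl fun l _ => by ring

lemma smoothS_symGradPairing (hξ : SmoothVF ξ) (hg : SmoothVF g) (hh : SmoothVF h) :
    SmoothS (symGradPairing ξ g h) := by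
  have hξ' := fun i => (hξ.pd i).component
  have hg' := hg.component
  have hh' := hh.component
  unfold SmoothS at *
  unfold symGradPairing symGrad
  fun_prop

lemma periodicS_symGradPairing (hpξ : Periodic3 ξ) (hpg : Periodic3 g) (hph : Periodic3 h) :
    PeriodicS (symGradPairing ξ g h) := fun x k => by
  simp only [symGradPairing, symGrad, (hpξ.pd _) x k, hpg x k, hph x k]

lemma pdS_symGradPairing (hξ : SmoothVF ξ) (hg : SmoothVF g) (hh : SmoothVF h) (j : Fin 3)
    (x : V3) :
    pdS j (symGradPairing ξ g h) x = ∑ i, ∑ l,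
      ((pd j (pd i ξ) x l + pd j (pd l ξ) x i) * (g x i * h x l)
        + symGrad ξ x i l * (pd j g x i * h x l + g x i * pd j h x l)) := by
  have hξ' := fun i => (hξ.pd i).differentiable_component
  have hg' := hg.differentiable_component
  have hh' := hh.differentiable_component
  unfold symGradPairing symGrad
  simp (disch := fun_prop) only [pdS_sum, pdS_mul, pdS_add]
  simp only [pdS_apply ((hξ.pd _).differentiable x), pdS_apply (hg.differentiable x),
    pdS_apply (hh.differentiable x)]

lemma pairing_integrand_eq (hξ : SmoothVF ξ) (hg : SmoothVF g) (hh : SmoothVF h) (x : V3) :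
    ∑ i, Bop ξ g x i * (stretch ξ h x i + stretchStar ξ h x i)
      + ∑ i, Bop ξ h x i * (stretch ξ g x i + stretchStar ξ g x i)
    = ∑ j, ξ x j * pdS j (symGradPairing ξ g h) x
      + ∑ u, ∑ v, pairingRemainder ξ x u v * (g x u * h x v) := by
  simp only [pdS_symGradPairing hξ hg hh, Bop_apply, stretch_add_stretchStar_apply,
    pairingRemainder, symGrad, Fin.sum_univ_three]
  ring

lemma abs_symGrad_le (hp : Periodic3 ξ) (hs : SmoothVF ξ) (hk : 1 ≤ k) (x : V3) (i l : Fin 3) :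
    |symGrad ξ x i l| ≤ 2 * WinfNorm k ξ := by
  have := abs_pd_apply_le_WinfNorm hp hs hk
  exact (abs_add_le _ _).trans (by linarith [this i x l, this l x i])

lemma abs_pairingRemainder_le (hp : Periodic3 ξ) (hs : SmoothVF ξ) (hk : 2 ≤ k) (x : V3)
    (u v : Fin 3) : |pairingRemainder ξ x u v| ≤ 18 * WinfNorm k ξ ^ 2 := by
  have hsym := abs_symGrad_le hp hs (by omega : 1 ≤ k) x
  have hpd := abs_pd_apply_le_WinfNorm hp hs (by omega : 1 ≤ k)
  have hpdpd := abs_pd_pd_apply_le_WinfNorm hp hs hk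
  have stretching (a b : Fin 3) :
      |∑ i, symGrad ξ x i a * pd i ξ x b| ≤ 6 * WinfNorm k ξ ^ 2 := by
    have := abs_sum_mul_le (fun i => hsym i a) (fun i => hpd i x b)
    simp only [Fintype.card_fin, Nat.cast_ofNat] at this; linarith
  have transport : |∑ j, ξ x j * (pd j (pd u ξ) x v + pd j (pd v ξ) x u)|
      ≤ 6 * WinfNorm k ξ ^ 2 := by
    have := abs_sum_mul_le (abs_apply_le_WinfNorm (k := k) hp hs x)
      (fun j => (abs_add_le _ _).trans (add_le_add (hpdpd j u x v) (hpdpd j v x u)))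
    simp only [Fintype.card_fin, Nat.cast_ofNat] at this; linarith
  unfold pairingRemainder
  linarith [abs_sub (∑ i, symGrad ξ x i v * pd i ξ x u + ∑ i, symGrad ξ x i u * pd i ξ x v)
      (∑ j, ξ x j * (pd j (pd u ξ) x v + pd j (pd v ξ) x u)),
    abs_add_le (∑ i, symGrad ξ x i v * pd i ξ x u) (∑ i, symGrad ξ x i u * pd i ξ x v),
    stretching v u, stretching u v]

lemma abs_sum_pairingRemainder_mul_le (hp : Periodic3 ξ) (hs : SmoothVF ξ) (hk : 2 ≤ k)
    (x : V3) :
    |∑ u, ∑ v, pairingRemainder ξ x u v * (g x u * h x v)|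
      ≤ 27 * WinfNorm k ξ ^ 2 * (∑ u, g x u * g x u + ∑ u, h x u * h x u) := by
  have := abs_sum_sum_mul_mul_le (abs_pairingRemainder_le hp hs hk x) (g x) (h x)
  norm_num at this
  linarith

theorem symmetrized_pairing_le (hξ : SmoothVF ξ) (hpξ : Periodic3 ξ) (hdiv : DivFree ξ)
    (hg : SmoothVF g) (hpg : Periodic3 g) (hh : SmoothVF h) (hph : Periodic3 h) (hk : 2 ≤ k) :
    L2inner (Bop ξ g) (fun x => stretch ξ h x + stretchStar ξ h x)
      + L2inner (Bop ξ h) (fun x => stretch ξ g x + stretchStar ξ g x)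
    ≤ 27 * WinfNorm k ξ ^ 2 * (L2inner g g + L2inner h h) := by
  set F := symGradPairing ξ g h
  have hF := smoothS_symGradPairing hξ hg hh
  have cξ := hξ.continuous_component
  have cξ' := fun i => (hξ.pd i).continuous_component
  have cξ'' := fun i j => ((hξ.pd i).pd j).continuous_component
  have cg := hg.continuous_component
  have cg' := fun i => (hg.pd i).continuous_component
  have ch := hh.continuous_component
  have ch' := fun i => (hh.pd i).continuous_component
  have cF := fun j => (hF.pdS j).continuous
  have hgh : IntegrableOn
      (fun x => ∑ i, Bop ξ g x i * (stretch ξ h x i + stretchStar ξ h x i)) cube :=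
    Continuous.integrableOn_cube <| by
      simp only [Bop_apply, stretch_add_stretchStar_apply, symGrad]; fun_prop
  have hhg : IntegrableOn
      (fun x => ∑ i, Bop ξ h x i * (stretch ξ g x i + stretchStar ξ g x i)) cube :=
    Continuous.integrableOn_cube <| by
      simp only [Bop_apply, stretch_add_stretchStar_apply, symGrad]; fun_prop
  have hT : IntegrableOn (fun x => ∑ j, ξ x j * pdS j F x) cube :=
    Continuous.integrableOn_cube (by fun_prop)
  have hR : IntegrableOn (fun x => ∑ u, ∑ v, pairingRemainder ξ x u v * (g x u * h x v)) cube :=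
    Continuous.integrableOn_cube (by unfold pairingRemainder symGrad; fun_prop)
  have hgg : IntegrableOn (fun x => ∑ u, g x u * g x u) cube :=
    Continuous.integrableOn_cube (by fun_prop)
  have hhh : IntegrableOn (fun x => ∑ u, h x u * h x u) cube :=
    Continuous.integrableOn_cube (by fun_prop)
  calc _ = ∫ x in cube, (∑ j, ξ x j * pdS j F x
          + ∑ u, ∑ v, pairingRemainder ξ x u v * (g x u * h x v)) :=
        (integral_add hgh hhg).symm.trans
          (setIntegral_congr_fun measurableSet_cube fun x _ => pairing_integrand_eq hξ hg hh x)
    _ = ∫ x in cube, ∑ u, ∑ v, pairingRemainder ξ x u v * (g x u * h x v) := by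
        rw [integral_add hT hR, integral_transport_eq_zero hξ hpξ hdiv hF
          (periodicS_symGradPairing hpξ hpg hph), zero_add]
    _ ≤ ∫ x in cube, 27 * WinfNorm k ξ ^ 2 * (∑ u, g x u * g x u + ∑ u, h x u * h x u) :=
        setIntegral_mono_on hR ((hgg.add hhh).const_mul _) measurableSet_cube fun x _ =>
          (le_abs_self _).trans (abs_sum_pairingRemainder_mul_le hpξ hξ hk x)
    _ = 27 * WinfNorm k ξ ^ 2 * (L2inner g g + L2inner h h) := by
        rw [integral_const_mul, integral_add hgg hhh]; rfl

lemma L2inner_self_nonneg (f : VF) : 0 ≤ L2inner f f :=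
  setIntegral_nonneg measurableSet_cube fun _ _ =>
    Finset.sum_nonneg fun _ _ => mul_self_nonneg _

lemma L2inner_Dm_self_le_sobNormSq (f : VF) {γ : ℕ × ℕ × ℕ} {m : ℕ} (hγ : mdeg γ ≤ m) :
    L2inner (Dm γ f) (Dm γ f) ≤ sobNormSq m f :=
  Finset.single_le_sum (f := fun δ => L2inner (Dm δ f) (Dm δ f))
    (fun _ _ => L2inner_self_nonneg _) (mem_midx_of_mdeg_le hγ)

end

/-- Control of the symmetrized top-order pairing of B_ξ against the self-adjoint part of the
stretching operator. -/
theorem stmt13 (α β : ℕ × ℕ × ℕ) :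
    ∃ C : ℝ, ∀ ξ f : VF, GoodField ξ → Periodic3 f → SmoothVF f →
      L2inner (Bop ξ (Dm α f)) (fun x => stretch ξ (Dm β f) x + stretchStar ξ (Dm β f) x)
        + L2inner (Bop ξ (Dm β f)) (fun x => stretch ξ (Dm α f) x + stretchStar ξ (Dm α f) x) ≤
      C * WinfNorm 2 ξ ^ 2 * sobNormSq (max (mdeg α) (mdeg β)) f := by
  refine ⟨54, fun ξ f ⟨hpξ, hξ, hdiv, _⟩ hpf hf => ?_⟩
  have hα := L2inner_Dm_self_le_sobNormSq f (le_max_left (mdeg α) (mdeg β))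
  have hβ := L2inner_Dm_self_le_sobNormSq f (le_max_right (mdeg α) (mdeg β))
  calc _ ≤ 27 * WinfNorm 2 ξ ^ 2 * (L2inner (Dm α f) (Dm α f) + L2inner (Dm β f) (Dm β f)) :=
        symmetrized_pairing_le hξ hpξ hdiv (hf.Dm α) (hpf.Dm α) (hf.Dm β) (hpf.Dm β) le_rfl
    _ ≤ 27 * WinfNorm 2 ξ ^ 2 * (sobNormSq (max (mdeg α) (mdeg β)) f
          + sobNormSq (max (mdeg α) (mdeg β)) f) := by gcongr
    _ = 54 * WinfNorm 2 ξ ^ 2 * sobNormSq (max (mdeg α) (mdeg β)) f := by ring
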